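/- For every nonnegative integer k: ∑_{n=0}^∞ (1/9)^n · ((1/2)_n (1/4+3k/2)_n (3/4+3k/2)_n)/((1+k)_n^2 (1)_n) · (8n+6k+1) = (2√3/π) · ((1)_k^2)/((1/6)_k (5/6)_k). -/

import Mathlib

/-
Multiplying the summand by w(k) = (1/6)_k (5/6)_k / (1)_k² gives a function F(n, k)
that forms a Wilf–Zeilberger pair with G(n, k) = R(n, k) F(n, k) for an explicit rational
certificate R: F(n, k) - F(n, k+1) = G(n+1, k) - G(n, k). Since G(0, k) = 0 and G(n, k) → 0 as
n → ∞, the sum ∑ₙ F(n, k) does not depend on k. As k → ∞, Euler's limit formula for Γ and the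
reflection formula Γ(1/6) Γ(5/6) = 2π give F(n, k) → (3/π) (1/2)ₙ/n! · 4⁻ⁿ, with the summable
domination F(n, k) ≤ (8n+1) 4⁻ⁿ; the binomial series sums the limit to (3/π)(3/4)^(-1/2) = 2√3/π.
-/

open Filter Real

noncomputable def poch (x : ℝ) : ℕ → ℝ
  | 0 => 1
  | n + 1 => poch x n * (x + n)
noncomputable def pochR (x k : ℝ) : ℝ := Real.Gamma (x + k) / Real.Gamma x

open Finset

lemma poch_pos {x : ℝ} (hx : 0 < x) (n : ℕ) : 0 < poch x n := by
  induction n with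
  | zero => simp [poch]
  | succ n ih => rw [poch]; positivity

lemma poch_one (n : ℕ) : poch 1 n = n.factorial := by
  induction n with
  | zero => simp [poch]
  | succ n ih => rw [poch, ih, Nat.factorial_succ]; push_cast; ring

lemma poch_eq_prod (x : ℝ) (n : ℕ) : poch x n = ∏ j ∈ range n, (x + j) := by
  induction n with
  | zero => simp [poch]
  | succ n ih => rw [poch, ih, prod_range_succ]

lemma poch_eq_ascPochhammer_eval (x : ℝ) (n : ℕ) : poch x n = (ascPochhammer ℝ n).eval x := by
  induction n with
  | zero => simp [poch]
  | succ n ih => rw [poch, ih, ascPochhammer_succ_eval]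

lemma poch_add_one {x : ℝ} (hx : x ≠ 0) (n : ℕ) : poch (x + 1) n = poch x n * (x + n) / x := by
  rw [eq_div_iff hx]
  induction n with
  | zero => simp [poch]
  | succ n ih =>
    simp only [poch, Nat.cast_succ]
    linear_combination (x + 1 + n) * ih

lemma poch_le_pow_mul_poch {x y c : ℝ} (hx : 0 ≤ x) (hc : 1 ≤ c) (hxy : x ≤ c * y) (n : ℕ) :
    poch x n ≤ c ^ n * poch y n := by
  induction n with
  | zero => simp [poch]
  | succ n ih =>
    have hxn : 0 ≤ poch x n := by rw [poch_eq_prod]; exact prod_nonneg fun j _ => by positivity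
    have hstep : x + n ≤ c * (y + n) := by nlinarith [(n.cast_nonneg : (0 : ℝ) ≤ n)]
    calc poch x (n + 1) = poch x n * (x + n) := by rw [poch]
      _ ≤ (c ^ n * poch y n) * (c * (y + n)) := mul_le_mul ih hstep (by positivity) (hxn.trans ih)
      _ = c ^ (n + 1) * poch y (n + 1) := by rw [poch, pow_succ]; ring

lemma tendsto_poch_div_poch (a b c : ℝ) (n : ℕ) :
    Tendsto (fun k : ℕ => poch (a + c * k) n / poch (b + k) n) atTop (nhds (c ^ n)) := by
  have := tendsto_finsetProd (range n) fun (j : ℕ) _ =>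
    tendsto_add_mul_div_add_mul_atTop_nhds (a + j) (b + j) c one_ne_zero
  rw [prod_const, card_range, div_one] at this
  refine this.congr fun k => ?_
  rw [poch_eq_prod, poch_eq_prod, ← prod_div_distrib]
  exact prod_congr rfl fun j _ => by ring

lemma ringChoose_add_sub_one (a : ℝ) (n : ℕ) :
    Ring.choose (a + n - 1) n = poch a n / n.factorial := by
  rw [← Ring.multichoose_eq, eq_div_iff (by positivity), mul_comm, ← nsmul_eq_mul,
    Ring.factorial_nsmul_multichoose_eq_ascPochhammer, Polynomial.ascPochhammer_smeval_eq_eval,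
    poch_eq_ascPochhammer_eval]

lemma hasSum_poch_div_factorial_mul_pow (a : ℝ) {x : ℝ} (hx : |x| < 1) :
    HasSum (fun n => poch a n / n.factorial * x ^ n) (1 / (1 - x) ^ a) := by
  have := (one_div_one_sub_rpow_hasFPowerSeriesOnBall_zero a).hasSum (y := x)
    (by simpa [← ENNReal.coe_one, ← Metric.eball_coe, ← NNReal.coe_lt_coe] using hx)
  simpa [FormalMultilinearSeries.ofScalars, ringChoose_add_sub_one, mul_comm] using this

lemma GammaSeq_eq_poch (s : ℝ) (k : ℕ) :
    GammaSeq s k = (k : ℝ) ^ s * k.factorial / (poch s k * (s + k)) := by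
  rw [GammaSeq, prod_range_succ, ← poch_eq_prod]

lemma tendsto_mul_poch_mul_poch_one_sub_div_factorial_sq {s : ℝ} (hs₀ : 0 < s) (hs₁ : s < 1) :
    Tendsto (fun k : ℕ => k * (poch s k * poch (1 - s) k) / (k.factorial : ℝ) ^ 2) atTop
      (nhds (sin (π * s) / π)) := by
  have hsin : 0 < sin (π * s) := sin_pos_of_pos_of_lt_pi (by positivity) (by nlinarith [pi_pos])
  have hGamma : Tendsto (fun k => GammaSeq s k * GammaSeq (1 - s) k) atTop
      (nhds (π / sin (π * s))) := by
    rw [← Gamma_mul_Gamma_one_sub]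
    exact (GammaSeq_tendsto_Gamma s).mul (GammaSeq_tendsto_Gamma (1 - s))
  -- the sequence is (k/(k+s)) (k/(k+1-s)) / (GammaSeq s k * GammaSeq (1-s) k)
  have hlim := ((tendsto_natCast_div_add_atTop s).mul (tendsto_natCast_div_add_atTop (1 - s))).div
    hGamma (by positivity)
  rw [one_mul, one_div_div] at hlim
  refine hlim.congr' ?_
  filter_upwards [eventually_ne_atTop 0] with k hk
  have hk' : (0 : ℝ) < k := by positivity
  have hrpow : (k : ℝ) ^ s * (k : ℝ) ^ (1 - s) = k := by
    rw [← rpow_add hk', add_sub_cancel, rpow_one]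
  have := poch_pos hs₀ k
  have := poch_pos (sub_pos.2 hs₁) k
  have : (0 : ℝ) < k + (1 - s) := by linarith
  simp only [Pi.div_apply, GammaSeq_eq_poch]
  field_simp
  linear_combination (-((k : ℝ) + s) * ((k : ℝ) + (1 - s))) * hrpow

lemma tsum_eq_tsum_zero_of_wz {F G : ℕ → ℕ → ℝ} (hF : ∀ k, Summable (F · k))
    (hFG : ∀ n k, F n k - F n (k + 1) = G (n + 1) k - G n k) (hG₀ : ∀ k, G 0 k = 0)
    (hG : ∀ k, Tendsto (G · k) atTop (nhds 0)) (k : ℕ) : ∑' n, F n k = ∑' n, F n 0 := by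
  induction k with
  | zero => rfl
  | succ k ih =>
    have hpartial : (fun N => ∑ n ∈ range N, (F n k - F n (k + 1))) = (G · k) := by
      ext N
      rw [sum_congr rfl fun n _ => hFG n k, sum_range_sub (G · k), hG₀, sub_zero]
    have hdiff := ((hF k).sub (hF (k + 1))).hasSum.tendsto_sum_nat
    rw [hpartial, (hF k).tsum_sub (hF (k + 1))] at hdiff
    linarith [tendsto_nhds_unique hdiff (hG k)]

noncomputable def summand (k n : ℕ) : ℝ :=
  (1/9 : ℝ)^n * (poch (1/2) n * poch (1/4 + 3*(k:ℝ)/2) n * poch (3/4 + 3*(k:ℝ)/2) n) /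
    ((poch (1 + k) n)^2 * poch 1 n) * (8*(n:ℝ)+6*(k:ℝ)+1)

noncomputable def weight (k : ℕ) : ℝ := poch (1/6) k * poch (5/6) k / poch 1 k ^ 2

noncomputable def wzF (n k : ℕ) : ℝ := summand k n * weight k

noncomputable def wzRatioN (n k : ℝ) : ℝ :=
  (n + 1/2) * (n + 1/4 + 3*k/2) * (n + 3/4 + 3*k/2) * (8*n + 6*k + 9) /
    (9 * (n + k + 1)^2 * (n + 1) * (8*n + 6*k + 1))

noncomputable def wzRatioK (n k : ℝ) : ℝ :=
  (n + 1/4 + 3*k/2) * (n + 3/4 + 3*k/2) * (n + 5/4 + 3*k/2) * (8*n + 6*k + 7) *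
      (k + 1/6) * (k + 5/6) /
    ((1/4 + 3*k/2) * (3/4 + 3*k/2) * (5/4 + 3*k/2) * (n + k + 1)^2 * (8*n + 6*k + 1))

noncomputable def wzCert (n k : ℝ) : ℝ := 8*n*(2*n - 1) / (3*(2*k + 1)*(8*n + 6*k + 1))

noncomputable def wzG (n k : ℕ) : ℝ := wzCert n k * wzF n k

lemma weight_succ (k : ℕ) : weight (k + 1) = weight k * ((k + 1/6) * (k + 5/6) / (k + 1)^2) := by
  have := poch_pos one_pos k
  simp only [weight, poch]
  field_simp
  ring

lemma weight_pos (k : ℕ) : 0 < weight k := by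
  have := poch_pos (by norm_num : (0:ℝ) < 1/6) k
  have := poch_pos (by norm_num : (0:ℝ) < 5/6) k
  have := poch_pos one_pos k
  unfold weight
  positivity

lemma summand_pos (k n : ℕ) : 0 < summand k n := by
  have := poch_pos (by norm_num : (0:ℝ) < 1/2) n
  have := poch_pos (by positivity : (0:ℝ) < 1/4 + 3*(k:ℝ)/2) n
  have := poch_pos (by positivity : (0:ℝ) < 3/4 + 3*(k:ℝ)/2) n
  have := poch_pos (by positivity : (0:ℝ) < 1 + (k:ℝ)) n
  have := poch_pos one_pos n
  unfold summand
  positivity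

lemma wzF_pos (n k : ℕ) : 0 < wzF n k := mul_pos (summand_pos k n) (weight_pos k)

lemma wzF_succ_left (n k : ℕ) : wzF (n + 1) k = wzF n k * wzRatioN n k := by
  have := poch_pos (by positivity : (0:ℝ) < 1 + (k:ℝ)) n
  have := poch_pos one_pos n
  simp only [wzF, summand, wzRatioN, poch, pow_succ]
  push_cast
  field_simp
  ring

lemma wzF_succ_right (n k : ℕ) : wzF n (k + 1) = wzF n k * wzRatioK n k := by
  have := poch_pos (by positivity : (0:ℝ) < 1/4 + 3*(k:ℝ)/2) n
  have := poch_pos (by positivity : (0:ℝ) < 3/4 + 3*(k:ℝ)/2) n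
  have := poch_pos (by positivity : (0:ℝ) < 1 + (k:ℝ)) n
  have := poch_pos one_pos n
  have h₁ : (1/4 + 3*((k + 1 : ℕ) : ℝ)/2) = (3/4 + 3*(k:ℝ)/2) + 1 := by push_cast; ring
  have h₂ : (3/4 + 3*((k + 1 : ℕ) : ℝ)/2) = ((1/4 + 3*(k:ℝ)/2) + 1) + 1 := by push_cast; ring
  have h₃ : (1 + ((k + 1 : ℕ) : ℝ)) = (1 + (k:ℝ)) + 1 := by push_cast; ring
  rw [wzF, wzF, weight_succ, summand, summand, h₁, h₂, h₃, poch_add_one (by positivity),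
    poch_add_one (by positivity), poch_add_one (by positivity), poch_add_one (by positivity)]
  simp only [wzRatioK]
  push_cast
  field_simp
  ring

lemma wzCert_identity {n k : ℝ} (hn : 0 ≤ n) (hk : 0 ≤ k) :
    1 - wzRatioK n k = wzCert (n + 1) k * wzRatioN n k - wzCert n k := by
  simp only [wzRatioK, wzRatioN, wzCert]
  field_simp
  ring

lemma wzF_sub_wzF_succ (n k : ℕ) : wzF n k - wzF n (k + 1) = wzG (n + 1) k - wzG n k := by
  rw [wzG, wzG, wzF_succ_right, wzF_succ_left, Nat.cast_succ]
  linear_combination wzF n k * wzCert_identity (n.cast_nonneg : (0:ℝ) ≤ n) k.cast_nonneg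

lemma wzF_eq_mul (n k : ℕ) : wzF n k = (1/9)^n * (poch (1/2) n / poch 1 n) *
    (poch (1/4 + 3*(k:ℝ)/2) n / poch (1 + k) n) * (poch (3/4 + 3*(k:ℝ)/2) n / poch (1 + k) n) *
    ((8*n + 6*k + 1) * weight k) := by
  have := poch_pos (by positivity : (0:ℝ) < 1 + (k:ℝ)) n
  have := poch_pos one_pos n
  rw [wzF, summand]
  field_simp

lemma mul_weight_le_one (k : ℕ) : (6*k + 1) * weight k ≤ 1 := by
  induction k with
  | zero => simp [weight, poch]
  | succ k ih =>
    have := weight_pos k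
    have hk : (0:ℝ) ≤ k := k.cast_nonneg
    calc (6*((k + 1 : ℕ) : ℝ) + 1) * weight (k + 1)
        = (6*k + 1) * weight k * ((6*k + 7) * (k + 1/6) * (k + 5/6) / ((6*k + 1) * (k + 1)^2)) := by
          rw [weight_succ]; push_cast; field_simp; ring
      _ ≤ 1 * 1 := by
          gcongr
          rw [div_le_one (by positivity)]
          nlinarith
      _ = 1 := one_mul 1

lemma wzF_le (n k : ℕ) : wzF n k ≤ (8*n + 1) * (1/4)^n := by
  have hk : (0:ℝ) ≤ k := k.cast_nonneg
  have hhalf : poch (1/2) n / poch 1 n ≤ 1 := by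
    rw [div_le_one (poch_pos one_pos n)]
    simpa using poch_le_pow_mul_poch (by norm_num : (0:ℝ) ≤ 1/2) le_rfl (by norm_num) n
  have hquarter : poch (1/4 + 3*(k:ℝ)/2) n / poch (1 + k) n ≤ (3/2)^n := by
    rw [div_le_iff₀ (poch_pos (by positivity) n)]
    exact poch_le_pow_mul_poch (by positivity) (by norm_num) (by linarith) n
  have hthreequarter : poch (3/4 + 3*(k:ℝ)/2) n / poch (1 + k) n ≤ (3/2)^n := by
    rw [div_le_iff₀ (poch_pos (by positivity) n)]
    exact poch_le_pow_mul_poch (by positivity) (by norm_num) (by linarith) n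
  have hweight : (8*n + 6*k + 1) * weight k ≤ 8*n + 1 := by
    have := weight_pos k
    calc (8*n + 6*k + 1) * weight k ≤ (8*n + 1) * ((6*k + 1) * weight k) := by
          nlinarith [mul_nonneg (n.cast_nonneg : (0:ℝ) ≤ n) hk]
      _ ≤ (8*n + 1) * 1 := by gcongr; exact mul_weight_le_one k
      _ = 8*n + 1 := mul_one _
  calc wzF n k ≤ (1/9)^n * 1 * (3/2)^n * (3/2)^n * (8*n + 1) := by
        rw [wzF_eq_mul]
        have := poch_pos (by norm_num : (0:ℝ) < 1/2) n
        have := poch_pos (by positivity : (0:ℝ) < 1/4 + 3*(k:ℝ)/2) n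
        have := poch_pos (by positivity : (0:ℝ) < 3/4 + 3*(k:ℝ)/2) n
        have := poch_pos (by positivity : (0:ℝ) < 1 + (k:ℝ)) n
        have := poch_pos one_pos n
        have := weight_pos k
        gcongr
    _ = (8*n + 1) * (1/9 * (3/2) * (3/2))^n := by rw [mul_pow, mul_pow]; ring
    _ = (8*n + 1) * (1/4)^n := by norm_num

lemma summable_wzF_bound : Summable fun n : ℕ => (8*n + 1) * (1/4 : ℝ)^n := by
  have hr : ‖(1/4 : ℝ)‖ < 1 := by norm_num
  refine (((summable_pow_mul_geometric_of_norm_lt_one 1 hr).mul_left 8).add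
    (summable_geometric_of_lt_one (r := 1/4) (by norm_num) (by norm_num))).congr fun n => ?_
  ring

lemma summable_wzF (k : ℕ) : Summable (wzF · k) :=
  summable_wzF_bound.of_nonneg_of_le (fun n => (wzF_pos n k).le) (fun n => wzF_le n k)

lemma wzCert_nonneg (n k : ℕ) : 0 ≤ wzCert n k := by
  rcases n.eq_zero_or_pos with rfl | hn
  · simp [wzCert]
  · have : (1:ℝ) ≤ n := by exact_mod_cast hn
    unfold wzCert
    exact div_nonneg (by nlinarith) (by positivity)

lemma wzCert_le (n k : ℕ) : wzCert n k ≤ n := by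
  have hn : (0:ℝ) ≤ n := n.cast_nonneg
  have hk : (0:ℝ) ≤ k := k.cast_nonneg
  rw [wzCert, div_le_iff₀ (by positivity)]
  nlinarith [mul_nonneg hn hk, mul_nonneg (mul_nonneg hn hk) hk, mul_nonneg (mul_nonneg hn hn) hk]

lemma tendsto_wzG_zero (k : ℕ) : Tendsto (wzG · k) atTop (nhds 0) := by
  have hlim :
      Tendsto (fun n : ℕ => 8 * ((n:ℝ)^2 * (1/4)^n) + (n:ℝ)^1 * (1/4)^n) atTop (nhds 0) := by
    simpa using ((tendsto_pow_const_mul_const_pow_of_lt_one 2 (r := 1/4) (by norm_num)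
      (by norm_num)).const_mul 8).add
      (tendsto_pow_const_mul_const_pow_of_lt_one 1 (r := 1/4) (by norm_num) (by norm_num))
  refine squeeze_zero (fun n => mul_nonneg (wzCert_nonneg n k) (wzF_pos n k).le) (fun n => ?_) hlim
  calc wzG n k ≤ n * ((8*n + 1) * (1/4)^n) :=
        mul_le_mul (wzCert_le n k) (wzF_le n k) (wzF_pos n k).le n.cast_nonneg
    _ = 8 * ((n:ℝ)^2 * (1/4)^n) + (n:ℝ)^1 * (1/4)^n := by ring

lemma tendsto_mul_weight (n : ℕ) :
    Tendsto (fun k : ℕ => (8*n + 6*k + 1) * weight k) atTop (nhds (3 / π)) := by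
  have hlim := (tendsto_add_mul_div_add_mul_atTop_nhds (8*n + 1 : ℝ) 0 6 one_ne_zero).mul
    (tendsto_mul_poch_mul_poch_one_sub_div_factorial_sq (by norm_num : (0:ℝ) < 1/6) (by norm_num))
  rw [show π * (1/6) = π / 6 by ring, sin_pi_div_six, show (1:ℝ) - 1/6 = 5/6 by norm_num] at hlim
  convert hlim.congr' ?_ using 2
  · field_simp
    norm_num
  · filter_upwards [eventually_ne_atTop 0] with k hk
    have := poch_pos one_pos k
    simp only [weight, poch_one]
    field_simp
    ring

lemma tendsto_wzF (n : ℕ) :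
    Tendsto (wzF n) atTop (nhds (3 / π * (poch (1/2) n / n.factorial * (1/4)^n))) := by
  have hlim := (((tendsto_const_nhds (x := (1/9 : ℝ)^n * (poch (1/2) n / poch 1 n))).mul
    (tendsto_poch_div_poch (1/4) 1 (3/2) n)).mul (tendsto_poch_div_poch (3/4) 1 (3/2) n)).mul
    (tendsto_mul_weight n)
  convert hlim using 2
  · rw [wzF_eq_mul]
    ring_nf
  · rw [poch_one, show (1/4 : ℝ) = 1/9 * (3/2) * (3/2) by norm_num, mul_pow, mul_pow]
    ring

lemma tsum_wzF (k : ℕ) : ∑' n, wzF n k = 2 * √3 / π := by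
  have hconst : (fun k => ∑' n, wzF n k) = fun _ => ∑' n, wzF n 0 :=
    funext (tsum_eq_tsum_zero_of_wz summable_wzF wzF_sub_wzF_succ (fun k => by simp [wzG, wzCert])
      tendsto_wzG_zero)
  have hlim := tendsto_tsum_of_dominated_convergence summable_wzF_bound tendsto_wzF
    (Eventually.of_forall fun k n => by
      rw [Real.norm_of_nonneg (wzF_pos n k).le]; exact wzF_le n k)
  rw [hconst, tsum_mul_left,
    (hasSum_poch_div_factorial_mul_pow (1/2) (by norm_num : |(1/4 : ℝ)| < 1)).tsum_eq] at hlim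
  rw [congrFun hconst k, tendsto_nhds_unique tendsto_const_nhds hlim,
    show (1:ℝ) - 1/4 = 3/4 by norm_num, ← sqrt_eq_rpow, sqrt_div' _ (by norm_num : (0:ℝ) ≤ 4),
    show (4:ℝ) = 2^2 by norm_num, sqrt_sq zero_le_two]
  have := sq_sqrt (show (0:ℝ) ≤ 3 by norm_num)
  field_simp
  linarith

theorem stmt_16 (k : ℕ) :
    Filter.Tendsto (fun N => ∑ n ∈ Finset.range N,
      (1/9 : ℝ)^n * (poch (1/2) n * poch (1/4 + 3*(k:ℝ)/2) n * poch (3/4 + 3*(k:ℝ)/2) n) / ((poch (1 + k) n)^2 * poch 1 n) * (8*(n:ℝ)+6*(k:ℝ)+1))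
      Filter.atTop (nhds (2 * Real.sqrt 3 / Real.pi * ((poch 1 k)^2 / (poch (1/6) k * poch (5/6) k)))) := by
  have hsum : HasSum (summand k) (2 * √3 / π / weight k) := by
    have := (summable_wzF k).hasSum.div_const (weight k)
    rw [tsum_wzF] at this
    simpa [wzF, mul_div_assoc, div_self (weight_pos k).ne'] using this
  rw [div_eq_mul_inv, weight, inv_div] at hsum
  exact hsum.tendsto_sum_nat
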